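/- Suppose that μ-almost everywhere g21 > g11 (receiver 2 sees uniformly strong interference) and g12 < g22 (receiver 1 sees uniformly weak interference) — the uniformly mixed conditions. Let α* denote the power-split policy (α1 ≡ 0, α2 ≡ 1). Then for every power-split policy (α1, α2), min over j ∈ {1,...,6} of S_j(α,p) ≤ min over j ∈ {1,...,6} of S_j(α*,p) = min(S2(α*,p), S3(α*,p)) = min( E[C(g11 p1/(1 + g12 p2))] + E[C(g22 p2)], E[C(g21 p1 + g22 p2)] ). -/

import Mathlib

open MeasureTheory

/-- `C(x) = log₂(1+x)`. -/
noncomputable def C (x : ℝ) : ℝ := Real.logb 2 (1 + x)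

variable {Ω : Type*} [MeasurableSpace Ω]

/-- Han–Kobayashi sum-rate bound `S1(α,p)` (sum of the two individual-rate bounds). -/
noncomputable def S1 (μ : Measure Ω) (g11 g12 g21 g22 p1 p2 a1 a2 : Ω → ℝ) : ℝ :=
  (∫ ω, C (g11 ω * p1 ω / (1 + a2 ω * g12 ω * p2 ω)) ∂μ)
    + ∫ ω, C (g22 ω * p2 ω / (1 + a1 ω * g21 ω * p1 ω)) ∂μ

/-- Han–Kobayashi sum-rate bound `S2(α,p)`. -/
noncomputable def S2 (μ : Measure Ω) (g11 g12 g21 g22 p1 p2 a1 a2 : Ω → ℝ) : ℝ :=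
  (∫ ω, C ((g11 ω * p1 ω + (1 - a2 ω) * g12 ω * p2 ω) / (1 + a2 ω * g12 ω * p2 ω)) ∂μ)
    + ∫ ω, C (a2 ω * g22 ω * p2 ω / (1 + a1 ω * g21 ω * p1 ω)) ∂μ

/-- Han–Kobayashi sum-rate bound `S3(α,p)`: `S2` with the roles of the two users swapped. -/
noncomputable def S3 (μ : Measure Ω) (g11 g12 g21 g22 p1 p2 a1 a2 : Ω → ℝ) : ℝ :=
  S2 μ g22 g21 g12 g11 p2 p1 a2 a1

/-- Han–Kobayashi sum-rate bound `S4(α,p)`. -/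
noncomputable def S4 (μ : Measure Ω) (g11 g12 g21 g22 p1 p2 a1 a2 : Ω → ℝ) : ℝ :=
  (∫ ω, C ((a1 ω * g11 ω * p1 ω + (1 - a2 ω) * g12 ω * p2 ω) / (1 + a2 ω * g12 ω * p2 ω)) ∂μ)
    + ∫ ω, C ((a2 ω * g22 ω * p2 ω + (1 - a1 ω) * g21 ω * p1 ω) / (1 + a1 ω * g21 ω * p1 ω)) ∂μ

/-- Han–Kobayashi sum-rate bound `S5(α,p)` (the `2R1 + R2` bound combined with `R2`). -/
noncomputable def S5 (μ : Measure Ω) (g11 g12 g21 g22 p1 p2 a1 a2 : Ω → ℝ) : ℝ :=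
  ((∫ ω, C ((g11 ω * p1 ω + (1 - a2 ω) * g12 ω * p2 ω) / (1 + a2 ω * g12 ω * p2 ω)) ∂μ)
    + (∫ ω, C (a1 ω * g11 ω * p1 ω / (1 + a2 ω * g12 ω * p2 ω)) ∂μ)
    + (∫ ω, C ((a2 ω * g22 ω * p2 ω + (1 - a1 ω) * g21 ω * p1 ω) / (1 + a1 ω * g21 ω * p1 ω)) ∂μ)
    + ∫ ω, C (g22 ω * p2 ω / (1 + a1 ω * g21 ω * p1 ω)) ∂μ) / 2

/-- Han–Kobayashi sum-rate bound `S6(α,p)`: `S5` with the roles of the two users swapped. -/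
noncomputable def S6 (μ : Measure Ω) (g11 g12 g21 g22 p1 p2 a1 a2 : Ω → ℝ) : ℝ :=
  S5 μ g22 g21 g12 g11 p2 p1 a2 a1

/-- The Han–Kobayashi sum-rate bound: `min` over `j ∈ {1,…,6}` of `S_j(α,p)`. -/
noncomputable def minS (μ : Measure Ω) (g11 g12 g21 g22 p1 p2 a1 a2 : Ω → ℝ) : ℝ :=
  min (S1 μ g11 g12 g21 g22 p1 p2 a1 a2)
    (min (S2 μ g11 g12 g21 g22 p1 p2 a1 a2)
      (min (S3 μ g11 g12 g21 g22 p1 p2 a1 a2)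
        (min (S4 μ g11 g12 g21 g22 p1 p2 a1 a2)
          (min (S5 μ g11 g12 g21 g22 p1 p2 a1 a2) (S6 μ g11 g12 g21 g22 p1 p2 a1 a2)))))

/-!
At `α* = (0, 1)` the six bounds collapse: `S1 = S2`, `S4 = S3` and `S5 = S6 = (S2 + S3) / 2`, so
their minimum is `min S2 S3`; it remains to see that `S2` and `S3` are both maximised at `α*`.
With `x = g11 p1`, `b = g12 p2`, `d = g22 p2`, `e = g21 p1` and `(s, t) = (α1, α2)`, the integrand of
`S2` is `log₂ ((1 + x + b) / (1 + t b) * (1 + t d / (1 + s e)))`, and the argument of the logarithm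
is at most `(1 + x + b) * (1 + t d) / (1 + t b)`. If `b ≤ d` (weak interference at receiver 1) the right side increases in `t`, so `t = 1, s = 0` is
optimal; if `d ≤ b` it is at most `1 + x + b`, the value at `t = 0, s = 1`. `S3` is `S2` for the
swapped users, which see strong interference since `g11 ≤ g21`.
-/

@[simp]
lemma C_zero : C 0 = 0 := by simp [C]

lemma C_nonneg {x : ℝ} (hx : 0 ≤ x) : 0 ≤ C x :=
  Real.logb_nonneg one_lt_two (by linarith)

lemma C_le_C {x y : ℝ} (hx : 0 ≤ x) (hxy : x ≤ y) : C x ≤ C y :=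
  Real.logb_le_logb_of_le one_lt_two (by linarith) (by linarith)

lemma C_add_C {u v : ℝ} (hu : 0 ≤ u) (hv : 0 ≤ v) :
    C u + C v = Real.logb 2 ((1 + u) * (1 + v)) :=
  (Real.logb_mul (by positivity) (by positivity)).symm

lemma C_add_C_le_C_add_C {u v u' v' : ℝ} (hu : 0 ≤ u) (hv : 0 ≤ v) (hu' : 0 ≤ u') (hv' : 0 ≤ v')
    (h : (1 + u) * (1 + v) ≤ (1 + u') * (1 + v')) : C u + C v ≤ C u' + C v' := by
  rw [C_add_C hu hv, C_add_C hu' hv']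
  exact Real.logb_le_logb_of_le one_lt_two (by positivity) h

@[fun_prop]
lemma measurable_C : Measurable C := by
  unfold C Real.logb
  fun_prop

section Pointwise

variable {x b d e s t : ℝ}

lemma S2_first_mem_Icc (hx : 0 ≤ x) (hb : 0 ≤ b) (ht₀ : 0 ≤ t) (ht₁ : t ≤ 1) :
    (x + (1 - t) * b) / (1 + t * b) ∈ Set.Icc 0 (x + b) :=
  ⟨by bound, div_le_of_le_mul₀ (by positivity) (by positivity)
    (by linarith [mul_nonneg ht₀ hb, mul_nonneg (mul_nonneg ht₀ hb) (add_nonneg hx hb)])⟩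

lemma S2_second_mem_Icc (hd : 0 ≤ d) (he : 0 ≤ e) (hs : 0 ≤ s) (ht₀ : 0 ≤ t) (ht₁ : t ≤ 1) :
    t * d / (1 + s * e) ∈ Set.Icc 0 d :=
  ⟨by positivity, div_le_of_le_mul₀ (by positivity) (by positivity)
    (by linarith [mul_nonneg hd (sub_nonneg.2 ht₁), mul_nonneg hd (mul_nonneg hs he)])⟩

lemma S2_integrands_prod_le (hx : 0 ≤ x) (hb : 0 ≤ b) (hd : 0 ≤ d) (he : 0 ≤ e) (hs : 0 ≤ s)
    (ht₀ : 0 ≤ t) :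
    (1 + (x + (1 - t) * b) / (1 + t * b)) * (1 + t * d / (1 + s * e))
      ≤ (1 + x + b) * (1 + t * d) / (1 + t * b) := by
  have htb : 0 < 1 + t * b := by positivity
  have hfirst : 1 + (x + (1 - t) * b) / (1 + t * b) = (1 + x + b) / (1 + t * b) := by
    field_simp; ring
  have hsecond : t * d / (1 + s * e) ≤ t * d := div_le_self (by positivity) (by nlinarith)
  rw [hfirst, div_mul_eq_mul_div]
  gcongr

lemma S2_pointwise_le_zero_one (hx : 0 ≤ x) (hb : 0 ≤ b) (hbd : b ≤ d) (he : 0 ≤ e) (hs : 0 ≤ s)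
    (ht₀ : 0 ≤ t) (ht₁ : t ≤ 1) :
    C ((x + (1 - t) * b) / (1 + t * b)) + C (t * d / (1 + s * e)) ≤ C (x / (1 + b)) + C d := by
  have hd : 0 ≤ d := hb.trans hbd
  refine C_add_C_le_C_add_C (S2_first_mem_Icc hx hb ht₀ ht₁).1
    (S2_second_mem_Icc hd he hs ht₀ ht₁).1 (by positivity) hd ?_
  refine (S2_integrands_prod_le hx hb hd he hs ht₀).trans ?_
  rw [one_add_div (by positivity : (1 : ℝ) + b ≠ 0), div_mul_eq_mul_div,
    div_le_div_iff₀ (by positivity) (by positivity)]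
  have hx' : 0 ≤ 1 + x + b := by positivity
  linarith [mul_nonneg (mul_nonneg (sub_nonneg.2 ht₁) (sub_nonneg.2 hbd)) hx']

lemma S2_pointwise_le_one_zero (hx : 0 ≤ x) (hd : 0 ≤ d) (hdb : d ≤ b) (he : 0 ≤ e) (hs : 0 ≤ s)
    (ht₀ : 0 ≤ t) (ht₁ : t ≤ 1) :
    C ((x + (1 - t) * b) / (1 + t * b)) + C (t * d / (1 + s * e)) ≤ C (x + b) := by
  have hb : 0 ≤ b := hd.trans hdb
  have hprod : (1 + x + b) * (1 + t * d) / (1 + t * b) ≤ (1 + (x + b)) * (1 + 0) := by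
    rw [div_le_iff₀ (by positivity)]
    nlinarith [mul_le_mul_of_nonneg_left hdb ht₀]
  simpa using C_add_C_le_C_add_C (S2_first_mem_Icc hx hb ht₀ ht₁).1
    (S2_second_mem_Icc hd he hs ht₀ ht₁).1 (by positivity) le_rfl
    ((S2_integrands_prod_le hx hb hd he hs ht₀).trans hprod)

end Pointwise

section Integrals

variable {μ : Measure Ω} {g11 g12 g21 g22 p1 p2 a1 a2 : Ω → ℝ}

lemma integrable_C_of_mem_Icc {f g : Ω → ℝ} (hf : Measurable f)
    (hfg : ∀ᵐ ω ∂μ, f ω ∈ Set.Icc 0 (g ω)) (hg : Integrable (fun ω => C (g ω)) μ) :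
    Integrable (fun ω => C (f ω)) μ := by
  refine hg.mono' (by fun_prop : Measurable fun ω => C (f ω)).aestronglyMeasurable ?_
  filter_upwards [hfg] with ω ⟨h₀, h⟩
  rw [Real.norm_of_nonneg (C_nonneg h₀)]
  exact C_le_C h₀ h

lemma integrable_S2_integrands (hg11 : Measurable g11) (hg12 : Measurable g12)
    (hg21 : Measurable g21) (hg22 : Measurable g22) (hp1 : Measurable p1) (hp2 : Measurable p2)
    (ha1 : Measurable a1) (ha2 : Measurable a2)
    (hg11n : ∀ ω, 0 ≤ g11 ω) (hg12n : ∀ ω, 0 ≤ g12 ω) (hg21n : ∀ ω, 0 ≤ g21 ω)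
    (hg22n : ∀ ω, 0 ≤ g22 ω) (hp1n : ∀ ω, 0 ≤ p1 ω) (hp2n : ∀ ω, 0 ≤ p2 ω)
    (ha1n : ∀ ω, 0 ≤ a1 ω) (ha2r : ∀ ω, a2 ω ∈ Set.Icc (0 : ℝ) 1)
    (hI1 : Integrable (fun ω => C (g11 ω * p1 ω + g12 ω * p2 ω)) μ)
    (hI2 : Integrable (fun ω => C (g22 ω * p2 ω)) μ) :
    Integrable (fun ω =>
        C ((g11 ω * p1 ω + (1 - a2 ω) * g12 ω * p2 ω) / (1 + a2 ω * g12 ω * p2 ω))) μ ∧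
      Integrable (fun ω => C (a2 ω * g22 ω * p2 ω / (1 + a1 ω * g21 ω * p1 ω))) μ := by
  refine ⟨integrable_C_of_mem_Icc (by fun_prop) (ae_of_all _ fun ω => ?_) hI1,
    integrable_C_of_mem_Icc (by fun_prop) (ae_of_all _ fun ω => ?_) hI2⟩
  · simpa only [mul_assoc] using S2_first_mem_Icc (mul_nonneg (hg11n ω) (hp1n ω))
      (mul_nonneg (hg12n ω) (hp2n ω)) (ha2r ω).1 (ha2r ω).2
  · simpa only [mul_assoc] using S2_second_mem_Icc (mul_nonneg (hg22n ω) (hp2n ω))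
      (mul_nonneg (hg21n ω) (hp1n ω)) (ha1n ω) (ha2r ω).1 (ha2r ω).2

lemma S2_le_S2_of_ae_le {a1' a2' : Ω → ℝ} (hg11 : Measurable g11) (hg12 : Measurable g12)
    (hg21 : Measurable g21) (hg22 : Measurable g22) (hp1 : Measurable p1) (hp2 : Measurable p2)
    (ha1 : Measurable a1) (ha2 : Measurable a2) (ha1' : Measurable a1') (ha2' : Measurable a2')
    (hg11n : ∀ ω, 0 ≤ g11 ω) (hg12n : ∀ ω, 0 ≤ g12 ω) (hg21n : ∀ ω, 0 ≤ g21 ω)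
    (hg22n : ∀ ω, 0 ≤ g22 ω) (hp1n : ∀ ω, 0 ≤ p1 ω) (hp2n : ∀ ω, 0 ≤ p2 ω)
    (ha1n : ∀ ω, 0 ≤ a1 ω) (ha2r : ∀ ω, a2 ω ∈ Set.Icc (0 : ℝ) 1)
    (ha1n' : ∀ ω, 0 ≤ a1' ω) (ha2r' : ∀ ω, a2' ω ∈ Set.Icc (0 : ℝ) 1)
    (hI1 : Integrable (fun ω => C (g11 ω * p1 ω + g12 ω * p2 ω)) μ)
    (hI2 : Integrable (fun ω => C (g22 ω * p2 ω)) μ)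
    (hle : ∀ᵐ ω ∂μ,
      C ((g11 ω * p1 ω + (1 - a2 ω) * g12 ω * p2 ω) / (1 + a2 ω * g12 ω * p2 ω))
          + C (a2 ω * g22 ω * p2 ω / (1 + a1 ω * g21 ω * p1 ω))
        ≤ C ((g11 ω * p1 ω + (1 - a2' ω) * g12 ω * p2 ω) / (1 + a2' ω * g12 ω * p2 ω))
          + C (a2' ω * g22 ω * p2 ω / (1 + a1' ω * g21 ω * p1 ω))) :
    S2 μ g11 g12 g21 g22 p1 p2 a1 a2 ≤ S2 μ g11 g12 g21 g22 p1 p2 a1' a2' := by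
  obtain ⟨hf₁, hf₂⟩ := integrable_S2_integrands hg11 hg12 hg21 hg22 hp1 hp2 ha1 ha2
    hg11n hg12n hg21n hg22n hp1n hp2n ha1n ha2r hI1 hI2
  obtain ⟨hf₁', hf₂'⟩ := integrable_S2_integrands hg11 hg12 hg21 hg22 hp1 hp2 ha1' ha2'
    hg11n hg12n hg21n hg22n hp1n hp2n ha1n' ha2r' hI1 hI2
  rw [S2, S2, ← integral_add hf₁ hf₂, ← integral_add hf₁' hf₂']
  exact integral_mono_ae (hf₁.add hf₂) (hf₁'.add hf₂') hle

lemma S2_zero_one : S2 μ g11 g12 g21 g22 p1 p2 0 1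
    = (∫ ω, C (g11 ω * p1 ω / (1 + g12 ω * p2 ω)) ∂μ) + ∫ ω, C (g22 ω * p2 ω) ∂μ := by
  simp [S2]

lemma S2_one_zero : S2 μ g11 g12 g21 g22 p1 p2 1 0 = ∫ ω, C (g11 ω * p1 ω + g12 ω * p2 ω) ∂μ := by
  simp [S2]

lemma S2_le_S2_zero_one (hg11 : Measurable g11) (hg12 : Measurable g12)
    (hg21 : Measurable g21) (hg22 : Measurable g22) (hp1 : Measurable p1) (hp2 : Measurable p2)
    (ha1 : Measurable a1) (ha2 : Measurable a2)
    (hg11n : ∀ ω, 0 ≤ g11 ω) (hg12n : ∀ ω, 0 ≤ g12 ω) (hg21n : ∀ ω, 0 ≤ g21 ω)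
    (hg22n : ∀ ω, 0 ≤ g22 ω) (hp1n : ∀ ω, 0 ≤ p1 ω) (hp2n : ∀ ω, 0 ≤ p2 ω)
    (ha1n : ∀ ω, 0 ≤ a1 ω) (ha2r : ∀ ω, a2 ω ∈ Set.Icc (0 : ℝ) 1)
    (hI1 : Integrable (fun ω => C (g11 ω * p1 ω + g12 ω * p2 ω)) μ)
    (hI2 : Integrable (fun ω => C (g22 ω * p2 ω)) μ) (hweak : ∀ᵐ ω ∂μ, g12 ω ≤ g22 ω) :
    S2 μ g11 g12 g21 g22 p1 p2 a1 a2 ≤ S2 μ g11 g12 g21 g22 p1 p2 0 1 := by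
  refine S2_le_S2_of_ae_le hg11 hg12 hg21 hg22 hp1 hp2 ha1 ha2 measurable_const measurable_const
    hg11n hg12n hg21n hg22n hp1n hp2n ha1n ha2r (fun _ => le_rfl) (fun _ => by simp) hI1 hI2 ?_
  filter_upwards [hweak] with ω h
  simpa [mul_assoc] using S2_pointwise_le_zero_one (mul_nonneg (hg11n ω) (hp1n ω))
    (mul_nonneg (hg12n ω) (hp2n ω)) (mul_le_mul_of_nonneg_right h (hp2n ω))
    (mul_nonneg (hg21n ω) (hp1n ω)) (ha1n ω) (ha2r ω).1 (ha2r ω).2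

lemma S2_le_S2_one_zero (hg11 : Measurable g11) (hg12 : Measurable g12)
    (hg21 : Measurable g21) (hg22 : Measurable g22) (hp1 : Measurable p1) (hp2 : Measurable p2)
    (ha1 : Measurable a1) (ha2 : Measurable a2)
    (hg11n : ∀ ω, 0 ≤ g11 ω) (hg12n : ∀ ω, 0 ≤ g12 ω) (hg21n : ∀ ω, 0 ≤ g21 ω)
    (hg22n : ∀ ω, 0 ≤ g22 ω) (hp1n : ∀ ω, 0 ≤ p1 ω) (hp2n : ∀ ω, 0 ≤ p2 ω)
    (ha1n : ∀ ω, 0 ≤ a1 ω) (ha2r : ∀ ω, a2 ω ∈ Set.Icc (0 : ℝ) 1)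
    (hI1 : Integrable (fun ω => C (g11 ω * p1 ω + g12 ω * p2 ω)) μ)
    (hI2 : Integrable (fun ω => C (g22 ω * p2 ω)) μ) (hstrong : ∀ᵐ ω ∂μ, g22 ω ≤ g12 ω) :
    S2 μ g11 g12 g21 g22 p1 p2 a1 a2 ≤ S2 μ g11 g12 g21 g22 p1 p2 1 0 := by
  refine S2_le_S2_of_ae_le hg11 hg12 hg21 hg22 hp1 hp2 ha1 ha2 measurable_const measurable_const
    hg11n hg12n hg21n hg22n hp1n hp2n ha1n ha2r (fun _ => zero_le_one) (fun _ => by simp) hI1 hI2 ?_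
  filter_upwards [hstrong] with ω h
  simpa [mul_assoc] using S2_pointwise_le_one_zero (mul_nonneg (hg11n ω) (hp1n ω))
    (mul_nonneg (hg22n ω) (hp2n ω)) (mul_le_mul_of_nonneg_right h (hp2n ω))
    (mul_nonneg (hg21n ω) (hp1n ω)) (ha1n ω) (ha2r ω).1 (ha2r ω).2

end Integrals

section Evaluation

variable {μ : Measure Ω} {g11 g12 g21 g22 p1 p2 : Ω → ℝ}

lemma S3_zero_one :
    S3 μ g11 g12 g21 g22 p1 p2 0 1 = ∫ ω, C (g21 ω * p1 ω + g22 ω * p2 ω) ∂μ := by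
  simp only [S3, S2_one_zero, add_comm]

lemma S1_zero_one : S1 μ g11 g12 g21 g22 p1 p2 0 1 = S2 μ g11 g12 g21 g22 p1 p2 0 1 := by
  simp [S1, S2_zero_one]

lemma S4_zero_one : S4 μ g11 g12 g21 g22 p1 p2 0 1 = S3 μ g11 g12 g21 g22 p1 p2 0 1 := by
  simp [S4, S3, S2]

lemma S5_zero_one : S5 μ g11 g12 g21 g22 p1 p2 0 1
    = (S2 μ g11 g12 g21 g22 p1 p2 0 1 + S3 μ g11 g12 g21 g22 p1 p2 0 1) / 2 := by
  simp only [S5, S3, S2, Pi.zero_apply, Pi.one_apply, zero_mul, one_mul, sub_self, sub_zero,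
    add_zero, zero_div, div_one, C_zero, integral_zero]
  ring

lemma S6_zero_one : S6 μ g11 g12 g21 g22 p1 p2 0 1
    = (S2 μ g11 g12 g21 g22 p1 p2 0 1 + S3 μ g11 g12 g21 g22 p1 p2 0 1) / 2 := by
  simp only [S6, S5, S3, S2, Pi.zero_apply, Pi.one_apply, zero_mul, one_mul, sub_self, sub_zero,
    add_zero, zero_div, div_one, C_zero, integral_zero]
  ring

lemma minS_zero_one : minS μ g11 g12 g21 g22 p1 p2 0 1
    = min (S2 μ g11 g12 g21 g22 p1 p2 0 1) (S3 μ g11 g12 g21 g22 p1 p2 0 1) := by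
  rw [minS, S1_zero_one, S4_zero_one, S5_zero_one, S6_zero_one]
  grind

end Evaluation

theorem stmt13_general (μ : Measure Ω)
    (g11 g12 g21 g22 p1 p2 : Ω → ℝ)
    (hg11 : Measurable g11) (hg12 : Measurable g12)
    (hg21 : Measurable g21) (hg22 : Measurable g22)
    (hp1 : Measurable p1) (hp2 : Measurable p2)
    (hg11n : ∀ ω, 0 ≤ g11 ω) (hg12n : ∀ ω, 0 ≤ g12 ω)
    (hg21n : ∀ ω, 0 ≤ g21 ω) (hg22n : ∀ ω, 0 ≤ g22 ω)
    (hp1n : ∀ ω, 0 ≤ p1 ω) (hp2n : ∀ ω, 0 ≤ p2 ω)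
    (hUM1 : ∀ᵐ ω ∂μ, g11 ω < g21 ω) (hUM2 : ∀ᵐ ω ∂μ, g12 ω < g22 ω)
    (hI1 : Integrable (fun ω => C (g11 ω * p1 ω + g12 ω * p2 ω)) μ)
    (hI2 : Integrable (fun ω => C (g21 ω * p1 ω + g22 ω * p2 ω)) μ)
    (a1 a2 : Ω → ℝ) (ha1 : Measurable a1) (ha2 : Measurable a2)
    (ha1r : ∀ ω, a1 ω ∈ Set.Icc (0 : ℝ) 1) (ha2r : ∀ ω, a2 ω ∈ Set.Icc (0 : ℝ) 1) :
    minS μ g11 g12 g21 g22 p1 p2 a1 a2 ≤ minS μ g11 g12 g21 g22 p1 p2 0 1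
    ∧ minS μ g11 g12 g21 g22 p1 p2 0 1
        = min (S2 μ g11 g12 g21 g22 p1 p2 0 1) (S3 μ g11 g12 g21 g22 p1 p2 0 1)
    ∧ min (S2 μ g11 g12 g21 g22 p1 p2 0 1) (S3 μ g11 g12 g21 g22 p1 p2 0 1)
        = min ((∫ ω, C (g11 ω * p1 ω / (1 + g12 ω * p2 ω)) ∂μ) + ∫ ω, C (g22 ω * p2 ω) ∂μ)
            (∫ ω, C (g21 ω * p1 ω + g22 ω * p2 ω) ∂μ) := by
  have hI22 : Integrable (fun ω => C (g22 ω * p2 ω)) μ :=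
    integrable_C_of_mem_Icc (by fun_prop) (ae_of_all _ fun ω =>
      ⟨mul_nonneg (hg22n ω) (hp2n ω), le_add_of_nonneg_left (mul_nonneg (hg21n ω) (hp1n ω))⟩) hI2
  have hI11 : Integrable (fun ω => C (g11 ω * p1 ω)) μ :=
    integrable_C_of_mem_Icc (by fun_prop) (ae_of_all _ fun ω =>
      ⟨mul_nonneg (hg11n ω) (hp1n ω), le_add_of_nonneg_right (mul_nonneg (hg12n ω) (hp2n ω))⟩) hI1
  have hS2 : S2 μ g11 g12 g21 g22 p1 p2 a1 a2 ≤ S2 μ g11 g12 g21 g22 p1 p2 0 1 :=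
    S2_le_S2_zero_one hg11 hg12 hg21 hg22 hp1 hp2 ha1 ha2 hg11n hg12n hg21n hg22n hp1n hp2n
      (fun ω => (ha1r ω).1) ha2r hI1 hI22 (hUM2.mono fun _ h => h.le)
  have hS3 : S3 μ g11 g12 g21 g22 p1 p2 a1 a2 ≤ S3 μ g11 g12 g21 g22 p1 p2 0 1 :=
    S2_le_S2_one_zero hg22 hg21 hg12 hg11 hp2 hp1 ha2 ha1 hg22n hg21n hg12n hg11n hp2n hp1n
      (fun ω => (ha2r ω).1) ha1r (by simpa only [add_comm] using hI2) hI11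
      (hUM1.mono fun _ h => h.le)
  refine ⟨?_, minS_zero_one, by rw [S2_zero_one, S3_zero_one]⟩
  rw [minS_zero_one, minS]
  exact le_min ((min_le_right _ _).trans <| (min_le_left _ _).trans hS2)
    ((min_le_right _ _).trans <| (min_le_right _ _).trans <| (min_le_left _ _).trans hS3)

/-- For a uniformly mixed ergodic fading IFC (a.e. `g21 > g11` and `g12 < g22`),
with `α* = (α1 ≡ 0, α2 ≡ 1)`, for every power-split policy `(α1, α2)`,
`min_{j∈{1,…,6}} S_j(α,p) ≤ min_{j∈{1,…,6}} S_j(α*,p) = min(S2(α*,p), S3(α*,p))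
  = min(E[C(g11 p1/(1 + g12 p2))] + E[C(g22 p2)], E[C(g21 p1 + g22 p2)])`. -/
theorem stmt13 (μ : Measure Ω) [IsProbabilityMeasure μ]
    (g11 g12 g21 g22 p1 p2 : Ω → ℝ)
    (hg11 : Measurable g11) (hg12 : Measurable g12)
    (hg21 : Measurable g21) (hg22 : Measurable g22)
    (hp1 : Measurable p1) (hp2 : Measurable p2)
    (hg11n : ∀ ω, 0 ≤ g11 ω) (hg12n : ∀ ω, 0 ≤ g12 ω)
    (hg21n : ∀ ω, 0 ≤ g21 ω) (hg22n : ∀ ω, 0 ≤ g22 ω)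
    (hp1n : ∀ ω, 0 ≤ p1 ω) (hp2n : ∀ ω, 0 ≤ p2 ω)
    (hUM1 : ∀ᵐ ω ∂μ, g11 ω < g21 ω) (hUM2 : ∀ᵐ ω ∂μ, g12 ω < g22 ω)
    (hI1 : Integrable (fun ω => C (g11 ω * p1 ω + g12 ω * p2 ω)) μ)
    (hI2 : Integrable (fun ω => C (g21 ω * p1 ω + g22 ω * p2 ω)) μ)
    (a1 a2 : Ω → ℝ) (ha1 : Measurable a1) (ha2 : Measurable a2)
    (ha1r : ∀ ω, a1 ω ∈ Set.Icc (0 : ℝ) 1) (ha2r : ∀ ω, a2 ω ∈ Set.Icc (0 : ℝ) 1) :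
    minS μ g11 g12 g21 g22 p1 p2 a1 a2 ≤ minS μ g11 g12 g21 g22 p1 p2 0 1
    ∧ minS μ g11 g12 g21 g22 p1 p2 0 1
        = min (S2 μ g11 g12 g21 g22 p1 p2 0 1) (S3 μ g11 g12 g21 g22 p1 p2 0 1)
    ∧ min (S2 μ g11 g12 g21 g22 p1 p2 0 1) (S3 μ g11 g12 g21 g22 p1 p2 0 1)
        = min ((∫ ω, C (g11 ω * p1 ω / (1 + g12 ω * p2 ω)) ∂μ) + ∫ ω, C (g22 ω * p2 ω) ∂μ)
            (∫ ω, C (g21 ω * p1 ω + g22 ω * p2 ω) ∂μ) :=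
  stmt13_general μ g11 g12 g21 g22 p1 p2 hg11 hg12 hg21 hg22 hp1 hp2 hg11n hg12n hg21n hg22n hp1n
    hp2n hUM1 hUM2 hI1 hI2 a1 a2 ha1 ha2 ha1r ha2r
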